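/- For every n ≥ 4, the fan graph T_n = K_1 + P_{n−1} (one vertex joined to all vertices of a path on n−1 vertices) is an outerplanar graph with n vertices and 2n − 3 edges containing no subgraph isomorphic to the double star S_{3,3}. -/

import Mathlib

/-!
Only the hub of the fan can have degree at least 4, whereas a double star `S_{3,3}` needs two adjacent
vertices of degree at least 4. Listing the vertices in their natural order gives a one-page book
embedding: a path edge joins consecutive vertices and every other edge ends at the hub, which comes
first, so no two edges cross. Counting each edge at its larger endpoint, vertex `1` contributes one
edge (to the hub) and every vertex `b ≥ 2` contributes two (to the hub and to `b - 1`).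
-/

open SimpleGraph Finset

/-- `G` contains a copy of the double star `S_{p,q}`: adjacent centers `x, y`,
with `p` leaves attached to `x` and `q` leaves attached to `y`, all distinct. -/
def ContainsDoubleStar {V : Type*} (G : SimpleGraph V) (p q : ℕ) : Prop :=
  ∃ (x y : V) (X Y : Finset V), G.Adj x y ∧ X.card = p ∧ Y.card = q ∧
    Disjoint X Y ∧ y ∉ X ∧ x ∉ Y ∧ (∀ v ∈ X, G.Adj x v) ∧ (∀ v ∈ Y, G.Adj y v)

/-- A graph is outerplanar iff it admits a one-page book embedding: a linear
ordering of the vertices such that no two edges cross. -/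
def IsOuterplanar {V : Type*} (G : SimpleGraph V) : Prop :=
  ∃ σ : V → Fin (Nat.card V), Function.Bijective σ ∧
    ∀ a b c d : V, G.Adj a b → G.Adj c d → ¬ (σ a < σ c ∧ σ c < σ b ∧ σ b < σ d)

/-- The fan `T_n = K_1 + P_{n-1}`: vertex `0` is the hub joined to every other
vertex, and the vertices `1, …, n-1` form a path in order. -/
def fan (n : ℕ) : SimpleGraph (Fin n) :=
  SimpleGraph.fromRel (fun i j => i.val = 0 ∨ (0 < i.val ∧ j.val = i.val + 1))

namespace SimpleGraph

variable {V : Type*} {G : SimpleGraph V}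

theorem card_edgeFinset_eq_sum_card_lt_adj [Fintype V] [LinearOrder V] [DecidableRel G.Adj] :
    #G.edgeFinset = ∑ b, #{a | a < b ∧ G.Adj a b} := by
  rw [card_eq_sum_card_fiberwise (f := Sym2.sup) (t := univ) fun _ _ => mem_univ _]
  refine sum_congr rfl fun b _ => (card_nbij (fun a => s(a, b)) ?_ ?_ ?_).symm
  · intro a ha
    simp only [coe_filter, Set.mem_ofPred_eq, mem_univ, true_and] at ha
    simpa [ha.2] using ha.1.le
  · intro a _ a' _ h
    exact Sym2.congr_left.mp h
  · intro e he
    induction e using Sym2.ind with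
    | h x y =>
      simp only [coe_filter, mem_edgeFinset, mem_edgeSet, Sym2.sup_mk, Set.mem_ofPred_eq] at he
      obtain ⟨hxy, rfl⟩ := he
      rcases lt_or_gt_of_ne hxy.ne with h | h
      · exact ⟨x, by simpa [h.le] using ⟨h, hxy⟩, by simp [h.le]⟩
      · exact ⟨y, by simpa [h.le] using ⟨h, hxy.symm⟩, by simp [h.le, Sym2.eq_swap]⟩

theorem card_le_degree_of_forall_adj [G.LocallyFinite] {v : V} {X : Finset V}
    (hX : ∀ w ∈ X, G.Adj v w) : #X ≤ G.degree v := by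
  rw [← card_neighborFinset_eq_degree]
  exact card_le_card fun w hw => (mem_neighborFinset G v w).mpr (hX w hw)

end SimpleGraph

theorem ContainsDoubleStar.exists_adj_le_degree {V : Type*} {G : SimpleGraph V} [G.LocallyFinite]
    {p q : ℕ} (h : ContainsDoubleStar G p q) :
    ∃ x y, G.Adj x y ∧ p + 1 ≤ G.degree x ∧ q + 1 ≤ G.degree y := by
  classical
  obtain ⟨x, y, X, Y, hxy, hX, hY, -, hyX, hxY, hXadj, hYadj⟩ := h
  refine ⟨x, y, hxy, ?_, ?_⟩
  · rw [← hX, ← card_insert_of_notMem hyX]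
    exact card_le_degree_of_forall_adj (forall_mem_insert _ _ _ |>.mpr ⟨hxy, hXadj⟩)
  · rw [← hY, ← card_insert_of_notMem hxY]
    exact card_le_degree_of_forall_adj (forall_mem_insert _ _ _ |>.mpr ⟨hxy.symm, hYadj⟩)

theorem isOuterplanar_of_forall_not_cross {n : ℕ} {G : SimpleGraph (Fin n)}
    (h : ∀ a b c d, G.Adj a b → G.Adj c d → ¬ (a < c ∧ c < b ∧ b < d)) : IsOuterplanar G :=
  ⟨Fin.cast (Nat.card_fin n).symm, (finCongr (Nat.card_fin n).symm).bijective,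
    fun a b c d hab hcd => by simpa only [Fin.cast_lt_cast] using h a b c d hab hcd⟩

lemma fan_adj {n : ℕ} {a b : Fin n} :
    (fan n).Adj a b ↔
      a.val ≠ b.val ∧ (a.val = 0 ∨ b.val = 0 ∨ a.val + 1 = b.val ∨ b.val + 1 = a.val) := by
  simp only [fan, fromRel_adj, ne_eq, Fin.val_inj]
  omega

instance (n : ℕ) : DecidableRel (fan n).Adj := fun _ _ => decidable_of_iff _ fan_adj.symm

lemma fan_degree_le_three {n : ℕ} (v : Fin n) (hv : v.val ≠ 0) : (fan n).degree v ≤ 3 := by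
  have hnbr : ∀ w ∈ (fan n).neighborFinset v, w.val ∈ ({0, v.val - 1, v.val + 1} : Finset ℕ) := by
    intro w hw
    rw [mem_neighborFinset, fan_adj] at hw
    simp only [mem_insert, mem_singleton]
    omega
  rw [← card_neighborFinset_eq_degree]
  calc #((fan n).neighborFinset v) ≤ #({0, v.val - 1, v.val + 1} : Finset ℕ) :=
        card_le_card_of_injOn Fin.val hnbr Fin.val_injective.injOn
    _ ≤ 3 := card_le_three

lemma not_containsDoubleStar_fan (n : ℕ) : ¬ ContainsDoubleStar (fan n) 3 3 := by
  intro h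
  obtain ⟨x, y, hxy, hx, hy⟩ := h.exists_adj_le_degree
  have hx0 : x.val = 0 := by by_contra hx0; linarith [fan_degree_le_three x hx0]
  have hy0 : y.val = 0 := by by_contra hy0; linarith [fan_degree_le_three y hy0]
  exact (fan_adj.mp hxy).1 (hx0.trans hy0.symm)

lemma isOuterplanar_fan (n : ℕ) : IsOuterplanar (fan n) :=
  isOuterplanar_of_forall_not_cross fun a b c d hab hcd hcross => by
    rw [fan_adj] at hab hcd
    simp only [Fin.lt_def] at hcross
    omega

lemma card_filter_lt_fan_adj {n : ℕ} (b : Fin n) : #{a | a < b ∧ (fan n).Adj a b} = min b.val 2 := by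
  have hval : ({a | a < b ∧ (fan n).Adj a b} : Finset _).map Fin.valEmbedding =
      {0, b.val - 1} ∩ range b := by
    ext k
    simp only [mem_map, mem_filter, mem_univ, true_and, fan_adj, Fin.valEmbedding_apply,
      mem_inter, mem_insert, mem_singleton, mem_range]
    constructor
    · rintro ⟨a, ⟨hab, hadj⟩, rfl⟩
      rw [Fin.lt_def] at hab
      omega
    · intro hk
      exact ⟨⟨k, by omega⟩, ⟨Fin.lt_def.mpr hk.2, by dsimp only; omega⟩, rfl⟩
  rw [← card_map, hval]
  obtain ⟨_ | _ | b, hb⟩ := b <;> simp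

-- Truncated subtraction makes the right-hand side `0` for `n ≤ 1`, matching the empty sums.
lemma sum_range_min_two (n : ℕ) : ∑ k ∈ range n, min k 2 = 2 * n - 3 := by
  induction n with
  | zero => rfl
  | succ n ih => rw [sum_range_succ, ih]; omega

lemma card_edgeFinset_fan (n : ℕ) : #(fan n).edgeFinset = 2 * n - 3 := by
  rw [card_edgeFinset_eq_sum_card_lt_adj]
  simp only [card_filter_lt_fan_adj]
  rw [Fin.sum_univ_eq_sum_range (fun k => min k 2), sum_range_min_two]

theorem stmt14_general (n : ℕ) :
    IsOuterplanar (fan n) ∧ Nat.card (Fin n) = n ∧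
      Nat.card (fan n).edgeSet = 2 * n - 3 ∧ ¬ ContainsDoubleStar (fan n) 3 3 :=
  ⟨isOuterplanar_fan n, Nat.card_fin n,
    by rw [Nat.card_eq_fintype_card, ← edgeFinset_card, card_edgeFinset_fan],
    not_containsDoubleStar_fan n⟩

theorem stmt14 (n : ℕ) (hn : 4 ≤ n) :
    IsOuterplanar (fan n) ∧ Nat.card (Fin n) = n ∧
      Nat.card (fan n).edgeSet = 2 * n - 3 ∧ ¬ ContainsDoubleStar (fan n) 3 3 :=
  stmt14_general n
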